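/- Let T be a closed triangulated surface with at most 11 vertices and let (G, D, {D₁,…,Dₙ}) be a minimal decomposition of T. Then the genus-surface G has either 1 or 2 boundary components. -/

import Mathlib

namespace Tri

/-- A (pure 2-dimensional) simplicial complex, given by its set of triangles
(each triangle is a 3-element finset of vertex labels). -/
abbrev Complex := Finset (Finset ℕ)

/-- The vertices of a complex. -/
def vertices (K : Complex) : Finset ℕ := K.biUnion id

/-- The edges of a complex: 2-element subsets of triangles. -/
def edges (K : Complex) : Finset (Finset ℕ) := K.biUnion fun t => t.powersetCard 2

/-- The valence of a vertex: the number of triangles containing it. -/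
def valence (K : Complex) (v : ℕ) : ℕ := (K.filter (fun t => v ∈ t)).card

/-- The maximal vertex-valence of a complex. -/
def mv (K : Complex) : ℕ := (vertices K).sup (valence K)

/-- Euler characteristic V - E + T. -/
def eulerChar (K : Complex) : ℤ :=
  ((vertices K).card : ℤ) - (edges K).card + K.card

/-- Two triangles of `K` both containing `v` and sharing an edge. -/
def adjAt (K : Complex) (v : ℕ) (t₁ t₂ : Finset ℕ) : Prop :=
  t₁ ∈ K ∧ t₂ ∈ K ∧ v ∈ t₁ ∧ v ∈ t₂ ∧ (t₁ ∩ t₂).card = 2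

/-- Two triangles of `K` sharing an edge. -/
def adj (K : Complex) (t₁ t₂ : Finset ℕ) : Prop :=
  t₁ ∈ K ∧ t₂ ∈ K ∧ (t₁ ∩ t₂).card = 2

/-- A triangulation of a connected compact surface, possibly with boundary:
every triangle has 3 vertices, every edge lies in at most two triangles,
the triangles around every vertex are connected via edges through that vertex
(so every vertex link is a path or a circle), and the complex is connected. -/
structure IsSurface (K : Complex) : Prop where
  nonempty : K.Nonempty
  card3 : ∀ t ∈ K, t.card = 3
  edge_le : ∀ e ∈ edges K, (K.filter (fun t => e ⊆ t)).card ≤ 2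
  link_conn : ∀ v, ∀ t₁ ∈ K, ∀ t₂ ∈ K, v ∈ t₁ → v ∈ t₂ →
    Relation.ReflTransGen (adjAt K v) t₁ t₂
  conn : ∀ t₁ ∈ K, ∀ t₂ ∈ K, Relation.ReflTransGen (adj K) t₁ t₂

/-- A triangulation of a closed (connected compact) surface: every edge lies
in exactly two triangles. -/
def IsClosedSurface (K : Complex) : Prop :=
  IsSurface K ∧ ∀ e ∈ edges K, (K.filter (fun t => e ⊆ t)).card = 2

/-- Boundary edges: edges lying in exactly one triangle. -/
def bdryEdges (K : Complex) : Finset (Finset ℕ) :=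
  (edges K).filter (fun e => (K.filter (fun t => e ⊆ t)).card = 1)

/-- Boundary vertices. -/
def bdryVertices (K : Complex) : Finset ℕ := (bdryEdges K).biUnion id

/-- Interior vertices. -/
def intVertices (K : Complex) : Finset ℕ := vertices K \ bdryVertices K

/-- A triangulated disc: a connected compact surface with nonempty boundary and
Euler characteristic 1. -/
def IsDisc (K : Complex) : Prop :=
  IsSurface K ∧ eulerChar K = 1 ∧ (bdryEdges K).Nonempty

/-- Two edges sharing a vertex. -/
def edgeAdj (E : Complex) (e₁ e₂ : Finset ℕ) : Prop :=
  e₁ ∈ E ∧ e₂ ∈ E ∧ (e₁ ∩ e₂).Nonempty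

/-- A set of edges forming a triangulated circle. -/
def IsCircle (E : Complex) : Prop :=
  E.Nonempty ∧ (∀ e ∈ E, e.card = 2) ∧
  (∀ v ∈ E.biUnion id, (E.filter (fun e => v ∈ e)).card = 2) ∧
  ∀ e₁ ∈ E, ∀ e₂ ∈ E, Relation.ReflTransGen (edgeAdj E) e₁ e₂

/-- Simplicial isomorphism (re-labeling). -/
def Iso (K₁ K₂ : Complex) : Prop :=
  ∃ f : ℕ → ℕ, Set.InjOn f (vertices K₁) ∧ K₁.image (Finset.image f) = K₂

/-- The boundary of the tetrahedron. -/
def tetra : Complex := {{1,2,3},{1,2,4},{1,3,4},{2,3,4}}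

/-- The boundary of the octahedron. -/
def octa : Complex := {{1,2,3},{1,2,4},{1,3,5},{1,4,5},{2,3,6},{2,4,6},{3,5,6},{4,5,6}}

/-- The vertices of the link of a vertex. -/
def linkV (K : Complex) (v : ℕ) : Finset ℕ :=
  ((K.filter (fun t => v ∈ t)).biUnion id).erase v

/-- The result of the inverse T-move removing the vertex `v`. -/
def invT (K : Complex) (v : ℕ) : Complex :=
  insert (linkV K v) (K.filter (fun t => v ∉ t))

/-- `K'` is obtained from `K` by an inverse T-move: a 3-valent vertex whose
link does not bound a triangle is removed. -/
def InvTStep (K K' : Complex) : Prop :=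
  ∃ v, valence K v = 3 ∧ linkV K v ∉ K ∧ K' = invT K v

/-- A root: a closed triangulated surface admitting no inverse T-move. -/
def IsRoot (K : Complex) : Prop := IsClosedSurface K ∧ ∀ K', ¬ InvTStep K K'

/-- `R` is a root of `K`: obtained from `K` by inverse T-moves, with no
further inverse T-move applicable. -/
def IsRootOf (R K : Complex) : Prop :=
  Relation.ReflTransGen InvTStep K R ∧ ∀ R', ¬ InvTStep R R'

/-- The directed edges of an ordered triangle. -/
def dedges (p : ℕ × ℕ × ℕ) : Finset (ℕ × ℕ) := {(p.1, p.2.1), (p.2.1, p.2.2), (p.2.2, p.1)}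

/-- Orientability: a coherent choice of cyclic orders on the triangles,
i.e. no directed edge is shared by two distinct triangles. -/
def Orientable (K : Complex) : Prop :=
  ∃ o : Finset ℕ → ℕ × ℕ × ℕ,
    (∀ t ∈ K, ({(o t).1, (o t).2.1, (o t).2.2} : Finset ℕ) = t) ∧
    ∀ t₁ ∈ K, ∀ t₂ ∈ K, t₁ ≠ t₂ → ∀ p ∈ dedges (o t₁), p ∉ dedges (o t₂)

/-- Two closed triangulated surfaces triangulate the same surface iff they
have the same Euler characteristic and the same orientability. -/
def SameSurface (K₁ K₂ : Complex) : Prop :=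
  eulerChar K₁ = eulerChar K₂ ∧ (Orientable K₁ ↔ Orientable K₂)

/-- The intersection of two subcomplexes is a triangulated circle or empty. -/
def CircleInter (A B : Complex) : Prop :=
  (IsCircle (edges A ∩ edges B) ∨ edges A ∩ edges B = ∅) ∧
  vertices A ∩ vertices B = (edges A ∩ edges B).biUnion id

/-- A decomposition `(G, D, Ds)` of a closed triangulated surface `K`. -/
structure IsDecomp (K G D : Complex) (Ds : Finset Complex) : Prop where
  closed : IsClosedSurface K
  subG : G ⊆ K
  subD : D ⊆ K
  subDs : ∀ Di ∈ Ds, Di ⊆ K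
  surfG : IsSurface G
  discD : IsDisc D
  discDs : ∀ Di ∈ Ds, IsDisc Di
  maxv : ∃ v ∈ intVertices D, valence K v = mv K
  cover : G ∪ D ∪ Ds.sup id = K
  disjGD : Disjoint G D
  disjGDs : ∀ Di ∈ Ds, Disjoint G Di
  disjDDs : ∀ Di ∈ Ds, Disjoint D Di
  disjDsDs : ∀ Di ∈ Ds, ∀ Dj ∈ Ds, Di ≠ Dj → Disjoint Di Dj
  interGD : CircleInter G D
  interGDs : ∀ Di ∈ Ds, CircleInter G Di
  interDDs : ∀ Di ∈ Ds, CircleInter D Di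
  interDsDs : ∀ Di ∈ Ds, ∀ Dj ∈ Ds, Di ≠ Dj → CircleInter Di Dj

/-- A minimal decomposition: the genus-surface has the fewest triangles. -/
def IsMinDecomp (K G D : Complex) (Ds : Finset Complex) : Prop :=
  IsDecomp K G D Ds ∧ ∀ G' D' Ds', IsDecomp K G' D' Ds' → G.card ≤ G'.card

/-!
Every boundary edge of `G` is shared with exactly one disc `X` of the decomposition, and the
discs meeting `G` do so along circles. These circles are pairwise vertex-disjoint: the link of a
vertex of a surface is a path or a cycle, so at most two boundary edges of `G` meet there.

Suppose three discs met `G`; two of them, `Y` and `Z`, differ from `D`. The closed star of a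
vertex of maximal valence, interior to `D`, has `mv K + 1` vertices, all in `D`, and meets `G`
only on the circle `G ∩ D`, which is disjoint from the circles `G ∩ Y` and `G ∩ Z` of at least
three vertices each. Hence `V(K) ≥ mv K + 7`, so `mv K ≤ 4` as `V(K) ≤ 11`. But then each
neighbour of a vertex `v` has at most one neighbour outside the closed star of `v`, and the ball
of radius two around `v` is closed under taking neighbours; so `V(K) ≤ 1 + 4 + 4 = 9`, while
`mv K + 7 ≥ 10`.
-/

open Finset

section Complexes

variable {K : Complex}

lemma mem_vertices {v : ℕ} : v ∈ vertices K ↔ ∃ t ∈ K, v ∈ t := by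
  simp [vertices]

lemma mem_edges {e : Finset ℕ} : e ∈ edges K ↔ ∃ t ∈ K, e ⊆ t ∧ e.card = 2 := by
  simp [edges]

lemma vertices_mono {K' : Complex} (h : K ⊆ K') : vertices K ⊆ vertices K' :=
  biUnion_subset_biUnion_of_subset_left _ h

lemma edges_mono {K' : Complex} (h : K ⊆ K') : edges K ⊆ edges K' :=
  biUnion_subset_biUnion_of_subset_left _ h

lemma card_eq_two_of_mem_edges {e : Finset ℕ} (he : e ∈ edges K) : e.card = 2 := by
  obtain ⟨t, -, -, he⟩ := mem_edges.1 he
  exact he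

lemma vertices_edges_subset (K : Complex) : vertices (edges K) ⊆ vertices K := by
  intro v hv
  obtain ⟨e, he, hve⟩ := mem_vertices.1 hv
  obtain ⟨t, ht, het, -⟩ := mem_edges.1 he
  exact mem_vertices.2 ⟨t, ht, het hve⟩

lemma exists_eq_pair_of_mem {e : Finset ℕ} {w : ℕ} (he : e.card = 2) (hw : w ∈ e) :
    ∃ u, u ≠ w ∧ e = {w, u} := by
  obtain ⟨x, y, hxy, rfl⟩ := card_eq_two.1 he
  rcases mem_insert.1 hw with rfl | hw
  · exact ⟨y, hxy.symm, rfl⟩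
  · rw [mem_singleton] at hw
    exact ⟨x, hw ▸ hxy, by rw [hw, pair_comm]⟩

lemma eq_or_eq_of_card_le_two {α : Type*} [DecidableEq α] {s : Finset α} {a b c : α}
    (hs : s.card ≤ 2) (ha : a ∈ s) (hb : b ∈ s) (hab : a ≠ b) (hc : c ∈ s) :
    c = a ∨ c = b := by
  by_contra! h
  have h3 : ({a, b, c} : Finset α).card = 3 :=
    card_eq_three.2 ⟨a, b, c, hab, h.1.symm, h.2.symm, rfl⟩
  have := card_le_card (show {a, b, c} ⊆ s by simp [insert_subset_iff, ha, hb, hc])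
  omega

lemma sym2_eq_of_card_le_two {α : Type*} [DecidableEq α] {s : Finset α} {a b c d : α}
    (hs : s.card ≤ 2) (ha : a ∈ s) (hb : b ∈ s) (hc : c ∈ s) (hd : d ∈ s) (hab : a ≠ b)
    (hcd : c ≠ d) : s(a, b) = s(c, d) := by
  rcases eq_or_eq_of_card_le_two hs ha hb hab hc with rfl | rfl <;>
    rcases eq_or_eq_of_card_le_two hs ha hb hab hd with rfl | rfl <;>
    first | exact absurd rfl hcd | rfl | exact Sym2.eq_swap

def star (K : Complex) (v : ℕ) : Complex := K.filter (fun t => v ∈ t)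

def cofaces (K : Complex) (e : Finset ℕ) : Complex := K.filter (fun t => e ⊆ t)

lemma valence_eq_card_star (v : ℕ) : valence K v = (star K v).card := rfl

lemma valence_le_mv (v : ℕ) : valence K v ≤ mv K := by
  by_cases hv : v ∈ vertices K
  · exact le_sup hv
  · have : star K v = ∅ := filter_eq_empty_iff.2 fun t ht hvt => hv (mem_vertices.2 ⟨t, ht, hvt⟩)
    simp [valence_eq_card_star, this]

lemma mem_linkV {u v : ℕ} : u ∈ linkV K v ↔ u ≠ v ∧ ∃ t ∈ K, v ∈ t ∧ u ∈ t := by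
  simp only [linkV, mem_erase, mem_biUnion, mem_filter, id, and_assoc]

lemma mem_linkV_comm {u v : ℕ} : u ∈ linkV K v ↔ v ∈ linkV K u := by
  simp only [mem_linkV]
  exact ⟨fun ⟨h, t, ht, hv, hu⟩ => ⟨h.symm, t, ht, hu, hv⟩,
    fun ⟨h, t, ht, hu, hv⟩ => ⟨h.symm, t, ht, hv, hu⟩⟩

lemma notMem_linkV_self (v : ℕ) : v ∉ linkV K v := fun h => (mem_linkV.1 h).1 rfl

lemma subset_insert_linkV {t : Finset ℕ} {v : ℕ} (ht : t ∈ K) (hv : v ∈ t) :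
    t ⊆ insert v (linkV K v) := by
  intro u hu
  rcases eq_or_ne u v with rfl | huv
  · exact mem_insert_self _ _
  · exact mem_insert_of_mem (mem_linkV.2 ⟨huv, t, ht, hv, hu⟩)

lemma pair_mem_edges {u v : ℕ} (hu : u ∈ linkV K v) : {v, u} ∈ edges K := by
  obtain ⟨huv, t, ht, hv, hu⟩ := mem_linkV.1 hu
  exact mem_edges.2 ⟨t, ht, by simp [insert_subset_iff, hv, hu], card_pair huv.symm⟩

lemma cofaces_pair_nonempty {u v : ℕ} (hu : u ∈ linkV K v) : (cofaces K {v, u}).Nonempty := by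
  obtain ⟨-, t, ht, hv, hu⟩ := mem_linkV.1 hu
  exact ⟨t, mem_filter.2 ⟨ht, by simp [insert_subset_iff, hv, hu]⟩⟩

lemma sum_card_cofaces_pair (hK : ∀ t ∈ K, t.card = 3) (v : ℕ) :
    ∑ u ∈ linkV K v, (cofaces K {v, u}).card = 2 * valence K v := by
  have h := sum_card_bipartiteAbove_eq_sum_card_bipartiteBelow (fun u t => u ∈ t)
    (s := linkV K v) (t := star K v)
  have habove : ∀ u, bipartiteAbove (fun u t => u ∈ t) (star K v) u = cofaces K {v, u} := by
    intro u
    ext t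
    simp only [mem_bipartiteAbove, star, cofaces, mem_filter, insert_subset_iff,
      singleton_subset_iff]
    tauto
  have hbelow : ∀ t ∈ star K v, bipartiteBelow (fun u t => u ∈ t) (linkV K v) t = t.erase v := by
    intro t ht
    obtain ⟨htK, hvt⟩ := mem_filter.1 ht
    ext u
    simp only [mem_bipartiteBelow, mem_linkV, mem_erase]
    exact ⟨fun ⟨⟨huv, _⟩, hu⟩ => ⟨huv, hu⟩, fun ⟨huv, hu⟩ => ⟨⟨huv, t, htK, hvt, hu⟩, hu⟩⟩
  calc ∑ u ∈ linkV K v, (cofaces K {v, u}).card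
      = ∑ u ∈ linkV K v, (bipartiteAbove (fun u t => u ∈ t) (star K v) u).card := by
        simp_rw [habove]
    _ = ∑ t ∈ star K v, (bipartiteBelow (fun u t => u ∈ t) (linkV K v) t).card := h
    _ = ∑ t ∈ star K v, 2 := sum_congr rfl fun t ht => by
        rw [hbelow t ht, card_erase_of_mem (mem_filter.1 ht).2, hK t (mem_filter.1 ht).1]
    _ = 2 * valence K v := by rw [sum_const, smul_eq_mul, mul_comm, valence_eq_card_star]

end Complexes

section ClosedSurface

variable {K : Complex} (hK : IsClosedSurface K)
include hK

lemma IsClosedSurface.card_cofaces_pair {u v : ℕ} (hu : u ∈ linkV K v) :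
    (cofaces K {v, u}).card = 2 :=
  hK.2 _ (pair_mem_edges hu)

lemma IsClosedSurface.card_linkV (v : ℕ) : (linkV K v).card = valence K v := by
  have h := sum_card_cofaces_pair hK.1.card3 v
  rw [sum_congr rfl fun u hu => hK.card_cofaces_pair hu, sum_const, smul_eq_mul] at h
  omega

/-- The two triangles on the edge `{v, u}` provide two common neighbours of `v` and `u`. -/
lemma IsClosedSurface.two_le_card_linkV_inter {u v : ℕ} (hu : u ∈ linkV K v) :
    2 ≤ (linkV K v ∩ linkV K u).card := by
  rw [← hK.card_cofaces_pair hu]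
  refine card_le_card_of_forall_subsingleton (fun t a => a ∈ t) (fun t ht => ?_) ?_
  · obtain ⟨htK, hvut⟩ := mem_filter.1 ht
    have huv := (mem_linkV.1 hu).1
    obtain ⟨a, ha⟩ : (t \ {v, u}).Nonempty := by
      rw [← card_pos, card_sdiff_of_subset hvut, hK.1.card3 t htK, card_pair huv.symm]
      omega
    obtain ⟨hat, havu⟩ := mem_sdiff.1 ha
    simp only [mem_insert, mem_singleton, not_or] at havu
    exact ⟨a, mem_inter.2 ⟨mem_linkV.2 ⟨havu.1, t, htK, hvut (by simp), hat⟩,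
      mem_linkV.2 ⟨havu.2, t, htK, hvut (by simp), hat⟩⟩, hat⟩
  · intro a ha t₁ ht₁ t₂ ht₂
    obtain ⟨hav, -⟩ := mem_linkV.1 (mem_inter.1 ha).1
    obtain ⟨hau, -⟩ := mem_linkV.1 (mem_inter.1 ha).2
    have huv := (mem_linkV.1 hu).1
    have h3 : ({v, u, a} : Finset ℕ).card = 3 :=
      card_eq_three.2 ⟨v, u, a, huv.symm, hav.symm, hau.symm, rfl⟩
    have key : ∀ t ∈ cofaces K {v, u}, a ∈ t → t = {v, u, a} := by
      intro t ht hat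
      obtain ⟨htK, hvut⟩ := mem_filter.1 ht
      refine (eq_of_subset_of_card_le (insert_subset (hvut (by simp))
        (insert_subset (hvut (by simp)) (by simpa using hat))) ?_).symm
      rw [h3, hK.1.card3 t htK]
    rw [key t₁ ht₁.1 ht₁.2, key t₂ ht₂.1 ht₂.2]

lemma IsClosedSurface.three_le_card_linkV_inter_insert {u v : ℕ} (hu : u ∈ linkV K v) :
    3 ≤ (linkV K u ∩ insert v (linkV K v)).card := by
  have hsub : insert v (linkV K v ∩ linkV K u) ⊆ linkV K u ∩ insert v (linkV K v) :=
    insert_subset (mem_inter.2 ⟨mem_linkV_comm.1 hu, mem_insert_self _ _⟩)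
      fun a ha => mem_inter.2 ⟨(mem_inter.1 ha).2, mem_insert_of_mem (mem_inter.1 ha).1⟩
  have := card_le_card hsub
  rw [card_insert_of_notMem fun h => notMem_linkV_self v (mem_inter.1 h).1] at this
  have := hK.two_le_card_linkV_inter hu
  omega

lemma IsClosedSurface.three_le_valence {v : ℕ} (hv : v ∈ vertices K) : 3 ≤ valence K v := by
  obtain ⟨t, ht, hvt⟩ := mem_vertices.1 hv
  obtain ⟨u, hut, huv⟩ := exists_mem_ne (by rw [hK.1.card3 t ht]; omega : 1 < t.card) v
  have hu : u ∈ linkV K v := mem_linkV.2 ⟨huv, t, ht, hvt, hut⟩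
  have hsub : insert u (linkV K v ∩ linkV K u) ⊆ linkV K v :=
    insert_subset hu inter_subset_left
  have := card_le_card hsub
  rw [card_insert_of_notMem fun h => notMem_linkV_self u (mem_inter.1 h).2] at this
  have := hK.two_le_card_linkV_inter hu
  rw [← hK.card_linkV]
  omega

end ClosedSurface

lemma IsSurface.vertices_subset_of_forall_linkV_subset {K : Complex} (hK : IsSurface K)
    {W : Finset ℕ} {v : ℕ} (hvK : v ∈ vertices K) (hvW : v ∈ W)
    (hW : ∀ x ∈ W, linkV K x ⊆ W) : vertices K ⊆ W := by
  have hstar : ∀ x ∈ W, ∀ t ∈ K, x ∈ t → t ⊆ W := fun x hx t ht hxt =>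
    (subset_insert_linkV ht hxt).trans (insert_subset hx (hW x hx))
  obtain ⟨t₀, ht₀, hvt₀⟩ := mem_vertices.1 hvK
  have htri : ∀ t ∈ K, t ⊆ W := by
    intro t ht
    induction hK.conn t₀ ht₀ t ht with
    | refl => exact hstar v hvW t₀ ht₀ hvt₀
    | @tail s c _ hsc ih =>
      obtain ⟨hs, hc, hsc⟩ := hsc
      obtain ⟨x, hx⟩ := card_pos.1 (by omega : 0 < (s ∩ c).card)
      exact hstar x (ih hs (mem_inter.1 hx).1) c hc (mem_inter.1 hx).2
  intro x hx
  obtain ⟨t, ht, hxt⟩ := mem_vertices.1 hx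
  exact htri t ht hxt

section ValenceAtMostFour

variable {K : Complex} (hK : IsClosedSurface K) (hmv : mv K ≤ 4)
include hK hmv

lemma IsClosedSurface.card_linkV_sdiff_le_one {x : ℕ} {T : Finset ℕ}
    (hT : 3 ≤ (linkV K x ∩ T).card) : (linkV K x \ T).card ≤ 1 := by
  have := card_sdiff_add_card_inter (linkV K x) T
  have := hK.card_linkV x ▸ valence_le_mv (K := K) x
  omega

/-- At most one neighbour of `x` lies outside `N`, while every edge `xy` has two common
neighbours; so one of them is in `N`. -/
lemma IsClosedSurface.linkV_subset_of_three_le {N W : Finset ℕ} (hNW : ∀ c ∈ N, linkV K c ⊆ W)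
    {x : ℕ} (hx : 3 ≤ (linkV K x ∩ N).card) : linkV K x ⊆ W := by
  intro y hy
  by_contra hyW
  have hcommon : linkV K x ∩ linkV K y ⊆ linkV K x \ N := by
    intro c hc
    refine mem_sdiff.2 ⟨(mem_inter.1 hc).1, fun hcN => hyW (hNW c hcN ?_)⟩
    exact mem_linkV_comm.1 (mem_inter.1 hc).2
  have := card_le_card hcommon
  have := hK.two_le_card_linkV_inter hy
  have := hK.card_linkV_sdiff_le_one hmv hx
  omega

lemma IsClosedSurface.three_le_card_linkV_inter_of_mem_sdiff {u v x : ℕ}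
    (hu : u ∈ linkV K v) (hx : x ∈ linkV K u \ insert v (linkV K v)) :
    3 ≤ (linkV K x ∩ linkV K v).card := by
  obtain ⟨hxu, hxS⟩ := mem_sdiff.1 hx
  have hle := card_le_one.1
    (hK.card_linkV_sdiff_le_one hmv (hK.three_le_card_linkV_inter_insert hu))
  have hsub : insert u (linkV K u ∩ linkV K x) ⊆ linkV K x ∩ linkV K v := by
    refine insert_subset (mem_inter.2 ⟨mem_linkV_comm.1 hxu, hu⟩) fun a ha => ?_
    obtain ⟨hau, hax⟩ := mem_inter.1 ha
    have haS : a ∈ insert v (linkV K v) := by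
      by_contra haS
      exact notMem_linkV_self x (hle a (mem_sdiff.2 ⟨hau, haS⟩) x hx ▸ hax)
    have hav : a ≠ v := by
      rintro rfl
      exact hxS (mem_insert_of_mem (mem_linkV_comm.1 hax))
    exact mem_inter.2 ⟨hax, (mem_insert.1 haS).resolve_left hav⟩
  have := card_le_card hsub
  rw [card_insert_of_notMem fun h => notMem_linkV_self u (mem_inter.1 h).1] at this
  have := hK.two_le_card_linkV_inter hxu
  omega

theorem IsClosedSurface.card_vertices_le_nine : (vertices K).card ≤ 9 := by
  obtain ⟨t, ht⟩ := hK.1.nonempty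
  obtain ⟨v, hvt⟩ := card_pos.1 (by rw [hK.1.card3 t ht]; omega : 0 < t.card)
  set N := linkV K v
  set W := insert v N ∪ N.biUnion fun u => linkV K u \ insert v N
  have hNW : ∀ c ∈ N, linkV K c ⊆ W := by
    intro c hc y hy
    by_cases hyS : y ∈ insert v N
    · exact mem_union_left _ hyS
    · exact mem_union_right _ (mem_biUnion.2 ⟨c, hc, mem_sdiff.2 ⟨hy, hyS⟩⟩)
  have hclosed : ∀ x ∈ W, linkV K x ⊆ W := by
    intro x hx
    rcases mem_union.1 hx with hx | hx
    · rcases mem_insert.1 hx with rfl | hxN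
      · exact subset_union_left.trans' (subset_insert _ _)
      · exact hNW x hxN
    · obtain ⟨u, hu, hxu⟩ := mem_biUnion.1 hx
      exact hK.linkV_subset_of_three_le hmv hNW
        (hK.three_le_card_linkV_inter_of_mem_sdiff hmv hu hxu)
  have hN : N.card ≤ 4 := hK.card_linkV v ▸ (valence_le_mv v).trans hmv
  have hW : W.card ≤ 9 :=
    calc W.card ≤ (insert v N).card + (N.biUnion fun u => linkV K u \ insert v N).card :=
          card_union_le _ _
      _ ≤ (N.card + 1) + ∑ u ∈ N, (linkV K u \ insert v N).card :=
          add_le_add (card_insert_le _ _) card_biUnion_le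
      _ ≤ (N.card + 1) + ∑ u ∈ N, 1 := by
          gcongr with u hu
          exact hK.card_linkV_sdiff_le_one hmv (hK.three_le_card_linkV_inter_insert hu)
      _ ≤ 9 := by rw [sum_const, smul_eq_mul, mul_one]; omega
  exact (card_le_card (hK.1.vertices_subset_of_forall_linkV_subset
    (mem_vertices.2 ⟨t, ht, hvt⟩) (mem_union_left _ (mem_insert_self _ _)) hclosed)).trans hW

end ValenceAtMostFour

section Surface

def starGraph (K : Complex) (w : ℕ) : SimpleGraph (star K w) :=
  SimpleGraph.fromRel fun a b => (a.1 ∩ b.1).card = 2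

lemma starGraph_adj {K : Complex} {w : ℕ} {a b : star K w} :
    (starGraph K w).Adj a b ↔ a ≠ b ∧ (a.1 ∩ b.1).card = 2 := by
  rw [starGraph, SimpleGraph.fromRel_adj, inter_comm b.1, or_self]

variable {G : Complex} (hG : IsSurface G) (w : ℕ)
include hG

lemma IsSurface.card_cofaces_le_two {e : Finset ℕ} (he : e ∈ edges G) :
    (cofaces G e).card ≤ 2 :=
  hG.edge_le e he

lemma IsSurface.starGraph_connected {t : Finset ℕ} (ht : t ∈ star G w) :
    (starGraph G w).Connected := by
  have hreach : ∀ (a : star G w) y, Relation.ReflTransGen (adjAt G w) a.1 y →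
      ∀ hy : y ∈ star G w, (starGraph G w).Reachable a ⟨y, hy⟩ := by
    intro a y h
    induction h with
    | refl => exact fun _ => SimpleGraph.Reachable.refl _
    | @tail b c _ hbc ih =>
      intro hc
      obtain ⟨hb, -, hwb, -, hbc⟩ := hbc
      refine (ih (mem_filter.2 ⟨hb, hwb⟩)).trans (SimpleGraph.Adj.reachable ?_)
      refine starGraph_adj.2 ⟨fun h => ?_, hbc⟩
      rw [show b = c from congrArg Subtype.val h, inter_self, hG.card3 c (mem_filter.1 hc).1]
        at hbc
      omega
  have : Nonempty (star G w) := ⟨⟨t, ht⟩⟩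
  refine ⟨fun a b => hreach a b.1 ?_ b.2⟩
  obtain ⟨ha, hwa⟩ := mem_filter.1 a.2
  obtain ⟨hb, hwb⟩ := mem_filter.1 b.2
  exact hG.link_conn w a.1 ha b.1 hb hwa hwb

/-- An edge of `starGraph G w` is sent to the vertex `u ≠ w` of the edge shared by its two
triangles; only these two triangles contain `{w, u}`. -/
lemma IsSurface.card_edgeSet_starGraph_le :
    Nat.card (starGraph G w).edgeSet ≤
      ((linkV G w).filter fun u => (cofaces G {w, u}).card = 2).card := by
  have := Classical.decRel (starGraph G w).Adj
  rw [Nat.card_eq_fintype_card, ← SimpleGraph.edgeFinset_card]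
  refine card_le_card_of_forall_subsingleton (fun e u => ∀ a ∈ e, u ∈ a.1) ?_ ?_
  · intro e he
    induction e using Sym2.ind with | _ a b => ?_
    obtain ⟨hab, h2⟩ : a ≠ b ∧ (a.1 ∩ b.1).card = 2 :=
      starGraph_adj.1 (SimpleGraph.mem_edgeFinset.1 he)
    obtain ⟨u, hu, huw⟩ := exists_mem_ne (by omega : 1 < (a.1 ∩ b.1).card) w
    obtain ⟨hua, hub⟩ := mem_inter.1 hu
    obtain ⟨ha, hwa⟩ := mem_filter.1 a.2
    obtain ⟨hb, hwb⟩ := mem_filter.1 b.2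
    have hlink : u ∈ linkV G w := mem_linkV.2 ⟨huw, a.1, ha, hwa, hua⟩
    refine ⟨u, mem_filter.2 ⟨hlink,
      le_antisymm (hG.card_cofaces_le_two (pair_mem_edges hlink)) ?_⟩, ?_⟩
    · have hsub : {a.1, b.1} ⊆ cofaces G {w, u} := by
        simp [insert_subset_iff, cofaces, ha, hb, hwa, hwb, hua, hub]
      exact (card_pair fun h => hab (Subtype.ext h)).symm.le.trans (card_le_card hsub)
    · simp [hua, hub]
  · intro u hu e₁ he₁ e₂ he₂
    have hmem : ∀ a : star G w, u ∈ a.1 → a.1 ∈ cofaces G {w, u} := fun a hua =>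
      mem_filter.2 ⟨(mem_filter.1 a.2).1, by simp [insert_subset_iff, (mem_filter.1 a.2).2, hua]⟩
    induction e₁ using Sym2.ind with | _ a b => ?_
    induction e₂ using Sym2.ind with | _ c d => ?_
    have hab : a ≠ b := (starGraph_adj.1 (SimpleGraph.mem_edgeFinset.1 he₁.1)).1
    have hcd : c ≠ d := (starGraph_adj.1 (SimpleGraph.mem_edgeFinset.1 he₂.1)).1
    apply Sym2.map.injective Subtype.val_injective
    simp only [Sym2.map_mk]
    exact sym2_eq_of_card_le_two (mem_filter.1 hu).2.le (hmem a (he₁.2 a (by simp)))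
      (hmem b (he₁.2 b (by simp))) (hmem c (he₂.2 c (by simp))) (hmem d (he₂.2 d (by simp)))
      (fun h => hab (Subtype.ext h)) fun h => hcd (Subtype.ext h)

lemma IsSurface.valence_le_card_filter_linkV_add_one :
    valence G w ≤ ((linkV G w).filter fun u => (cofaces G {w, u}).card = 2).card + 1 := by
  rcases (star G w).eq_empty_or_nonempty with h | ⟨t, ht⟩
  · simp [valence_eq_card_star, h]
  · have := (hG.starGraph_connected w ht).card_vert_le_card_edgeSet_add_one
    rw [Nat.card_eq_finsetCard] at this
    have := hG.card_edgeSet_starGraph_le w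
    rw [valence_eq_card_star]
    omega

/-- Counting the triangles through the link vertices gives
`2 * valence = 2 * #interior + #boundary`, and connectedness of the triangles around `w` gives
`valence ≤ #interior + 1`. -/
lemma IsSurface.card_bdryEdges_filter_le_two : ((bdryEdges G).filter (w ∈ ·)).card ≤ 2 := by
  set B := (linkV G w).filter fun u => ¬ (cofaces G {w, u}).card = 2
  have hB : ∀ u ∈ B, (cofaces G {w, u}).card = 1 := by
    intro u hu
    obtain ⟨hu, hu2⟩ := mem_filter.1 hu
    have := hG.card_cofaces_le_two (pair_mem_edges hu)
    have := card_pos.2 (cofaces_pair_nonempty hu)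
    omega
  have hsum := sum_card_cofaces_pair hG.card3 w
  rw [← sum_filter_add_sum_filter_not _ fun u => (cofaces G {w, u}).card = 2,
    sum_congr rfl fun u hu => (mem_filter.1 hu).2, sum_congr rfl hB] at hsum
  simp only [sum_const, smul_eq_mul, mul_one] at hsum
  have hval := hG.valence_le_card_filter_linkV_add_one w
  have hsub : (bdryEdges G).filter (w ∈ ·) ⊆ B.image fun u => {w, u} := by
    intro e he
    obtain ⟨he, hwe⟩ := mem_filter.1 he
    obtain ⟨heG, he1⟩ := mem_filter.1 he
    obtain ⟨t, ht, het, he2⟩ := mem_edges.1 heG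
    obtain ⟨u, huw, rfl⟩ := exists_eq_pair_of_mem he2 hwe
    have hu : u ∈ linkV G w := mem_linkV.2 ⟨huw, t, ht, het (by simp), het (by simp)⟩
    exact mem_image.2 ⟨u, mem_filter.2 ⟨hu, by simp only [cofaces, he1]; omega⟩, rfl⟩
  have := (card_le_card hsub).trans card_image_le
  omega

end Surface

lemma IsCircle.three_le_card_vertices {E : Complex} (hE : IsCircle E) :
    3 ≤ (vertices E).card := by
  obtain ⟨⟨e₀, he₀⟩, hcard, hdeg, -⟩ := hE
  obtain ⟨p, hp⟩ := card_pos.1 (by rw [hcard e₀ he₀]; omega : 0 < e₀.card)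
  have hpE : p ∈ vertices E := mem_vertices.2 ⟨e₀, he₀, hp⟩
  obtain ⟨e₁, he₁, he₁₀⟩ := exists_mem_ne (by rw [hdeg p hpE]; omega :
    1 < (E.filter (p ∈ ·)).card) e₀
  obtain ⟨he₁, hp₁⟩ := mem_filter.1 he₁
  have hinter : (e₀ ∩ e₁).card ≤ 1 := by
    by_contra! h
    have h₀ := eq_of_subset_of_card_le (inter_subset_left : e₀ ∩ e₁ ⊆ e₀)
      (by rw [hcard e₀ he₀]; omega)
    have h₁ := eq_of_subset_of_card_le (inter_subset_right : e₀ ∩ e₁ ⊆ e₁)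
      (by rw [hcard e₁ he₁]; omega)
    exact he₁₀ (h₁.symm.trans h₀)
  have hsub : e₀ ∪ e₁ ⊆ vertices E := union_subset
    (fun x hx => mem_vertices.2 ⟨e₀, he₀, hx⟩) fun x hx => mem_vertices.2 ⟨e₁, he₁, hx⟩
  have := card_union_add_card_inter e₀ e₁
  have := card_le_card hsub
  rw [hcard e₀ he₀, hcard e₁ he₁] at *
  omega

lemma IsSurface.exists_adj_mem_notMem {K A : Complex} (hK : IsSurface K) {a b : Finset ℕ}
    (ha : a ∈ A) (hAK : A ⊆ K) (hb : b ∈ K) (hbA : b ∉ A) :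
    ∃ s ∈ A, ∃ t ∈ K, t ∉ A ∧ (s ∩ t).card = 2 := by
  induction hK.conn a (hAK ha) b hb with
  | refl => exact absurd ha hbA
  | @tail s t _ hst ih =>
    by_cases hs : s ∈ A
    · exact ⟨s, hs, t, hst.2.1, hbA, hst.2.2⟩
    · exact ih hst.1 hs

lemma IsClosedSurface.mem_bdryEdges_of_disjoint {K A B : Complex} (hK : IsClosedSurface K)
    (hA : A ⊆ K) (hB : B ⊆ K) (hAB : Disjoint A B) {e : Finset ℕ} (heA : e ∈ edges A)
    (heB : e ∈ edges B) : e ∈ bdryEdges A := by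
  obtain ⟨t, ht, het, -⟩ := mem_edges.1 heA
  obtain ⟨s, hs, hes, -⟩ := mem_edges.1 heB
  have hsub : cofaces A e ⊆ (cofaces K e).erase s := fun r hr =>
    mem_erase.2 ⟨fun h => disjoint_left.1 hAB (h ▸ (mem_filter.1 hr).1) hs,
      mem_filter.2 ⟨hA (mem_filter.1 hr).1, (mem_filter.1 hr).2⟩⟩
  have := card_le_card hsub
  rw [card_erase_of_mem (show s ∈ cofaces K e from mem_filter.2 ⟨hB hs, hes⟩),
    show (cofaces K e).card = 2 from hK.2 e (edges_mono hA heA)] at this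
  have : 0 < (cofaces A e).card := card_pos.2 ⟨t, mem_filter.2 ⟨ht, het⟩⟩
  exact mem_filter.2 ⟨heA, show (cofaces A e).card = 1 by omega⟩

lemma CircleInter.symm {A B : Complex} (h : CircleInter A B) : CircleInter B A := by
  unfold CircleInter at h ⊢
  rwa [inter_comm (edges B), inter_comm (vertices B)]

lemma CircleInter.isCircle {A B : Complex} (h : CircleInter A B)
    (hne : (edges A ∩ edges B).Nonempty) : IsCircle (edges A ∩ edges B) :=
  h.1.resolve_right hne.ne_empty

/-- The edges shared with `B` are boundary edges of `A`. -/
lemma IsClosedSurface.notMem_vertices_of_mem_intVertices {K A B : Complex}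
    (hK : IsClosedSurface K) (hA : A ⊆ K) (hB : B ⊆ K) (hAB : Disjoint A B)
    (hAB' : CircleInter A B) {v : ℕ} (hv : v ∈ intVertices A) : v ∉ vertices B := by
  intro hvB
  obtain ⟨hvA, hvbd⟩ := mem_sdiff.1 hv
  obtain ⟨e, he, hve⟩ := mem_vertices.1 (hAB'.2.subset (mem_inter.2 ⟨hvA, hvB⟩))
  exact hvbd (mem_biUnion.2 ⟨e, hK.mem_bdryEdges_of_disjoint hA hB hAB
    (mem_inter.1 he).1 (mem_inter.1 he).2, hve⟩)

def edgeNeighbours (G : Complex) (P : Finset Complex) : Finset Complex :=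
  P.filter fun X => (edges G ∩ edges X).Nonempty

lemma mem_edgeNeighbours {G X : Complex} {P : Finset Complex} :
    X ∈ edgeNeighbours G P ↔ X ∈ P ∧ (edges G ∩ edges X).Nonempty :=
  mem_filter

namespace IsDecomp

variable {K G D : Complex} {Ds : Finset Complex} (hd : IsDecomp K G D Ds)
include hd

lemma subset_of_mem {X : Complex} (hX : X ∈ insert D Ds) : X ⊆ K := by
  rcases mem_insert.1 hX with rfl | hX
  exacts [hd.subD, hd.subDs X hX]

lemma disjoint_of_mem {X : Complex} (hX : X ∈ insert D Ds) : Disjoint G X := by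
  rcases mem_insert.1 hX with rfl | hX
  exacts [hd.disjGD, hd.disjGDs X hX]

lemma circleInter_of_mem {X : Complex} (hX : X ∈ insert D Ds) : CircleInter G X := by
  rcases mem_insert.1 hX with rfl | hX
  exacts [hd.interGD, hd.interGDs X hX]

lemma disjoint_of_mem_of_ne {X Y : Complex} (hX : X ∈ insert D Ds) (hY : Y ∈ insert D Ds)
    (hXY : X ≠ Y) : Disjoint X Y := by
  rcases mem_insert.1 hX with rfl | hX <;> rcases mem_insert.1 hY with hY' | hY
  · exact absurd hY'.symm hXY
  · exact hd.disjDDs Y hY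
  · exact hY' ▸ (hd.disjDDs X hX).symm
  · exact hd.disjDsDs X hX Y hY hXY

lemma exists_mem_of_notMem {t : Finset ℕ} (ht : t ∈ K) (htG : t ∉ G) :
    ∃ X ∈ insert D Ds, t ∈ X := by
  rw [← hd.cover, mem_union, mem_union] at ht
  rcases ht with (ht | ht) | ht
  · exact absurd ht htG
  · exact ⟨D, mem_insert_self _ _, ht⟩
  · obtain ⟨X, hX, htX⟩ := mem_sup.1 ht
    exact ⟨X, mem_insert_of_mem hX, htX⟩

lemma isCircle_of_mem_edgeNeighbours {X : Complex} (hX : X ∈ edgeNeighbours G (insert D Ds)) :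
    IsCircle (edges G ∩ edges X) :=
  (hd.circleInter_of_mem (mem_edgeNeighbours.1 hX).1).isCircle (mem_edgeNeighbours.1 hX).2

lemma interEdges_subset_bdryEdges {X : Complex} (hX : X ∈ insert D Ds) :
    edges G ∩ edges X ⊆ bdryEdges G := fun _ he =>
  hd.closed.mem_bdryEdges_of_disjoint hd.subG (hd.subset_of_mem hX) (hd.disjoint_of_mem hX)
    (mem_inter.1 he).1 (mem_inter.1 he).2

lemma bdryEdges_eq_biUnion :
    bdryEdges G = (edgeNeighbours G (insert D Ds)).biUnion fun X => edges G ∩ edges X := by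
  ext e
  simp only [mem_biUnion, mem_edgeNeighbours]
  constructor
  · intro he
    obtain ⟨heG, he1⟩ := mem_filter.1 he
    change (cofaces G e).card = 1 at he1
    obtain ⟨t, ht, htG⟩ : ∃ t ∈ cofaces K e, t ∉ G := by
      by_contra! h
      have : (cofaces K e).card ≤ (cofaces G e).card :=
        card_le_card fun t ht => mem_filter.2 ⟨h t ht, (mem_filter.1 ht).2⟩
      rw [show (cofaces K e).card = 2 from hd.closed.2 e (edges_mono hd.subG heG)] at this
      omega
    obtain ⟨X, hX, htX⟩ := hd.exists_mem_of_notMem (mem_filter.1 ht).1 htG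
    have heX : e ∈ edges G ∩ edges X := mem_inter.2 ⟨heG, mem_edges.2
      ⟨t, htX, (mem_filter.1 ht).2, card_eq_two_of_mem_edges heG⟩⟩
    exact ⟨X, ⟨hX, e, heX⟩, heX⟩
  · rintro ⟨X, ⟨hX, -⟩, he⟩
    exact hd.interEdges_subset_bdryEdges hX he

lemma disjoint_interEdges {X Y : Complex} (hX : X ∈ insert D Ds) (hY : Y ∈ insert D Ds)
    (hXY : X ≠ Y) : Disjoint (edges G ∩ edges X) (edges G ∩ edges Y) := by
  refine disjoint_left.2 fun e heX heY => ?_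
  obtain ⟨t, ht, het, -⟩ := mem_edges.1 (mem_inter.1 heX).1
  obtain ⟨s, hs, hes, -⟩ := mem_edges.1 (mem_inter.1 heX).2
  obtain ⟨r, hr, her, -⟩ := mem_edges.1 (mem_inter.1 heY).2
  have hts : t ≠ s := fun h => disjoint_left.1 (hd.disjoint_of_mem hX) ht (h ▸ hs)
  have htr : t ≠ r := fun h => disjoint_left.1 (hd.disjoint_of_mem hY) ht (h ▸ hr)
  have hsr : s ≠ r := fun h => disjoint_left.1 (hd.disjoint_of_mem_of_ne hX hY hXY) hs (h ▸ hr)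
  have hsub : {t, s, r} ⊆ cofaces K e := by
    simp only [insert_subset_iff, singleton_subset_iff, cofaces, mem_filter]
    exact ⟨⟨hd.subG ht, het⟩, ⟨hd.subset_of_mem hX hs, hes⟩, ⟨hd.subset_of_mem hY hr, her⟩⟩
  have := card_le_card hsub
  rw [card_eq_three.2 ⟨t, s, r, hts, htr, hsr, rfl⟩,
    show (cofaces K e).card = 2 from hd.closed.2 e (edges_mono hd.subG (mem_inter.1 heX).1)]
    at this
  omega

/-- A common vertex of two boundary circles of `G` would carry four boundary edges. -/
lemma disjoint_vertices_interEdges {X Y : Complex} (hX : X ∈ insert D Ds)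
    (hY : Y ∈ insert D Ds) (hXY : X ≠ Y) :
    Disjoint (vertices (edges G ∩ edges X)) (vertices (edges G ∩ edges Y)) := by
  refine disjoint_left.2 fun w hwX hwY => ?_
  have hcirc : ∀ Z ∈ insert D Ds, w ∈ vertices (edges G ∩ edges Z) →
      ((edges G ∩ edges Z).filter (w ∈ ·)).card = 2 := fun Z hZ hw =>
    ((hd.circleInter_of_mem hZ).isCircle (by
      obtain ⟨e, he, -⟩ := mem_vertices.1 hw
      exact ⟨e, he⟩)).2.2.1 w hw
  have hsub : (edges G ∩ edges X).filter (w ∈ ·) ∪ (edges G ∩ edges Y).filter (w ∈ ·) ⊆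
      (bdryEdges G).filter (w ∈ ·) := by
    rw [← filter_union]
    exact filter_subset_filter _
      (union_subset (hd.interEdges_subset_bdryEdges hX) (hd.interEdges_subset_bdryEdges hY))
  have := card_le_card hsub
  rw [card_union_of_disjoint (disjoint_filter_filter (hd.disjoint_interEdges hX hY hXY)),
    hcirc X hX hwX, hcirc Y hY hwY] at this
  have := hd.surfG.card_bdryEdges_filter_le_two w
  omega

lemma edgeNeighbours_nonempty : (edgeNeighbours G (insert D Ds)).Nonempty := by
  obtain ⟨a, ha⟩ := hd.surfG.nonempty
  obtain ⟨b, hb⟩ := hd.discD.1.nonempty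
  obtain ⟨s, hs, t, ht, htG, hst⟩ := hd.closed.1.exists_adj_mem_notMem ha hd.subG
    (hd.subD hb) (disjoint_right.1 hd.disjGD hb)
  obtain ⟨X, hX, htX⟩ := hd.exists_mem_of_notMem ht htG
  exact ⟨X, mem_edgeNeighbours.2 ⟨hX, s ∩ t, mem_inter.2
    ⟨mem_edges.2 ⟨s, hs, inter_subset_left, hst⟩, mem_edges.2 ⟨t, htX, inter_subset_right, hst⟩⟩⟩⟩

lemma star_subset {v : ℕ} (hv : v ∈ intVertices D) : star K v ⊆ D := by
  intro t ht
  obtain ⟨htK, hvt⟩ := mem_filter.1 ht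
  rw [← hd.cover, mem_union, mem_union] at htK
  rcases htK with (htG | htD) | htDs
  · exact absurd (mem_vertices.2 ⟨t, htG, hvt⟩) <| hd.closed.notMem_vertices_of_mem_intVertices
      hd.subD hd.subG hd.disjGD.symm hd.interGD.symm hv
  · exact htD
  · obtain ⟨X, hX, htX⟩ := mem_sup.1 htDs
    exact absurd (mem_vertices.2 ⟨t, htX, hvt⟩) <| hd.closed.notMem_vertices_of_mem_intVertices
      hd.subD (hd.subDs X hX) (hd.disjDDs X hX) (hd.interDDs X hX) hv

lemma mv_add_seven_le_card_vertices {Y Z : Complex} (hY : Y ∈ edgeNeighbours G (insert D Ds))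
    (hZ : Z ∈ edgeNeighbours G (insert D Ds)) (hYD : Y ≠ D) (hZD : Z ≠ D) (hYZ : Y ≠ Z) :
    mv K + 7 ≤ (vertices K).card := by
  obtain ⟨v, hv, hval⟩ := hd.maxv
  set S := insert v (linkV K v)
  have hS : S.card = mv K + 1 := by
    rw [card_insert_of_notMem (notMem_linkV_self v), hd.closed.card_linkV, hval]
  have hSD : S ⊆ vertices D := insert_subset (mem_sdiff.1 hv).1 fun u hu => by
    obtain ⟨-, t, ht, hvt, hut⟩ := mem_linkV.1 hu
    exact mem_vertices.2 ⟨t, hd.star_subset hv (mem_filter.2 ⟨ht, hvt⟩), hut⟩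
  have hD : D ∈ insert D Ds := mem_insert_self _ _
  have hY' := (mem_edgeNeighbours.1 hY).1
  have hZ' := (mem_edgeNeighbours.1 hZ).1
  have hVG : vertices (edges G ∩ edges D) ∪
      (vertices (edges G ∩ edges Y) ∪ vertices (edges G ∩ edges Z)) ⊆ vertices G := by
    refine union_subset ?_ (union_subset ?_ ?_) <;>
      exact (vertices_mono inter_subset_left).trans (vertices_edges_subset G)
  have hcardG := card_le_card hVG
  rw [card_union_of_disjoint (disjoint_union_right.2
      ⟨hd.disjoint_vertices_interEdges hD hY' hYD.symm,
        hd.disjoint_vertices_interEdges hD hZ' hZD.symm⟩),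
    card_union_of_disjoint (hd.disjoint_vertices_interEdges hY' hZ' hYZ)] at hcardG
  have h3Y := (hd.isCircle_of_mem_edgeNeighbours hY).three_le_card_vertices
  have h3Z := (hd.isCircle_of_mem_edgeNeighbours hZ).three_le_card_vertices
  have hGS : vertices G ∩ S ⊆ vertices (edges G ∩ edges D) :=
    (inter_subset_inter_left hSD).trans hd.interGD.2.subset
  have hK : vertices G ∪ S ⊆ vertices K :=
    union_subset (vertices_mono hd.subG) (hSD.trans (vertices_mono hd.subD))
  have := card_le_card hK
  have := card_le_card hGS
  have := card_union_add_card_inter (vertices G) S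
  omega

lemma card_edgeNeighbours_eq_one_or_two (hV : (vertices K).card ≤ 11) :
    (edgeNeighbours G (insert D Ds)).card = 1 ∨ (edgeNeighbours G (insert D Ds)).card = 2 := by
  have := card_pos.2 hd.edgeNeighbours_nonempty
  by_contra! h
  obtain ⟨Y, hY, Z, hZ, hYZ⟩ := one_lt_card.1 (lt_of_lt_of_le (by omega)
    (pred_card_le_card_erase (s := edgeNeighbours G (insert D Ds)) (a := D)))
  obtain ⟨hYD, hY⟩ := mem_erase.1 hY
  obtain ⟨hZD, hZ⟩ := mem_erase.1 hZ
  have hmv := hd.mv_add_seven_le_card_vertices hY hZ hYD hZD hYZ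
  obtain ⟨v, hv, -⟩ := hd.maxv
  have h3 := (hd.closed.three_le_valence (vertices_mono hd.subD (mem_sdiff.1 hv).1)).trans
    (valence_le_mv v)
  have := hd.closed.card_vertices_le_nine (by omega)
  omega

end IsDecomp

/-- if V(T) ≤ 11, a minimal genus-surface has 1 or 2 boundary
components. -/
theorem boundary_components_one_or_two (K G D : Complex) (Ds : Finset Complex)
    (hV : (vertices K).card ≤ 11) (h : IsMinDecomp K G D Ds) :
    IsCircle (bdryEdges G) ∨
      ∃ C₁ C₂ : Complex, C₁ ∪ C₂ = bdryEdges G ∧ Disjoint C₁ C₂ ∧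
        IsCircle C₁ ∧ IsCircle C₂ := by
  have hd := h.1
  rw [hd.bdryEdges_eq_biUnion]
  rcases hd.card_edgeNeighbours_eq_one_or_two hV with hN | hN
  · obtain ⟨X, hX⟩ := card_eq_one.1 hN
    rw [hX, singleton_biUnion]
    exact Or.inl (hd.isCircle_of_mem_edgeNeighbours (hX ▸ mem_singleton_self X))
  · obtain ⟨X, Y, hXY, hXYN⟩ := card_eq_two.1 hN
    have hX : X ∈ edgeNeighbours G (insert D Ds) := hXYN ▸ mem_insert_self _ _
    have hY : Y ∈ edgeNeighbours G (insert D Ds) := hXYN ▸ mem_insert_of_mem (mem_singleton_self _)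
    rw [hXYN, biUnion_insert, singleton_biUnion]
    exact Or.inr ⟨edges G ∩ edges X, edges G ∩ edges Y, rfl,
      hd.disjoint_interEdges (mem_edgeNeighbours.1 hX).1 (mem_edgeNeighbours.1 hY).1 hXY,
      hd.isCircle_of_mem_edgeNeighbours hX, hd.isCircle_of_mem_edgeNeighbours hY⟩

end Tri
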